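/- The map induced by the digit operator θ does not preserve Lebesgue measure: if p₁ ≠ p₂, then for the word d = (1,1,1,2,2) the Lebesgue measure of the cylinder Λ_d equals p₁³·p₂², the Lebesgue measure of its image cylinder Λ_{θ(1)θ(1)θ(1)θ(2)θ(2)} = Λ_{(2,2,2,1,1)} equals p₂³·p₁², and p₁³·p₂² ≠ p₂³·p₁². -/

import Mathlib

open scoped BigOperators

/-- `β j = ∑_{t < j} p t`. -/
noncomputable def salemBeta (p : Fin 3 → ℝ) (j : Fin 3) : ℝ :=
  ∑ t ∈ Finset.univ.filter (fun t => t < j), p t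

/-- The value of a digit sequence `γ : ℕ → {0,1,2}` (indexed from 0):
`val γ = β (γ 0) + ∑_{k ≥ 1} β (γ k) · ∏_{r < k} p (γ r)`. -/
noncomputable def salemVal (p : Fin 3 → ℝ) (γ : ℕ → Fin 3) : ℝ :=
  ∑' k : ℕ, salemBeta p (γ k) * ∏ r ∈ Finset.range k, p (γ r)

/-- The digit operator θ: θ(0)=0, θ(1)=2, θ(2)=1. -/
def theta : Fin 3 → Fin 3 := ![0, 2, 1]

/-- The cylinder with base given by the first `m` values of `c`. -/
def cylinder (p : Fin 3 → ℝ) (m : ℕ) (c : ℕ → Fin 3) : Set ℝ :=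
  { x | ∃ γ : ℕ → Fin 3, (∀ r < m, γ r = c r) ∧ salemVal p γ = x }

/-- The sequence starting with the first `m` digits of `c` and continuing with the
constant digit `j`. -/
def extendW (m : ℕ) (c : ℕ → Fin 3) (j : Fin 3) : ℕ → Fin 3 :=
  fun k => if k < m then c k else j

/-! ### Auxiliary development -/

section Aux

variable (p : Fin 3 → ℝ)

lemma beta_zero : salemBeta p 0 = 0 := by
  rw [salemBeta, show (Finset.univ.filter (fun t : Fin 3 => t < 0)) = ∅ from by decide]
  simp

lemma beta_one : salemBeta p 1 = p 0 := by
  rw [salemBeta, show (Finset.univ.filter (fun t : Fin 3 => t < 1)) = {0} from by decide,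
    Finset.sum_singleton]

lemma fin3_cases : ∀ j : Fin 3, j = 0 ∨ j = 1 ∨ j = 2 := by decide

lemma beta_two : salemBeta p 2 = p 0 + p 1 := by
  rw [salemBeta, show (Finset.univ.filter (fun t : Fin 3 => t < 2)) = {0, 1} from by decide,
    Finset.sum_pair (by decide)]

variable (hp : ∀ i, 0 < p i ∧ p i < 1) (hsum : p 0 + p 1 + p 2 = 1)

/-- maximum digit probability -/
noncomputable def qmax : ℝ := max (p 0) (max (p 1) (p 2))

include hp in
lemma qmax_pos : 0 < qmax p := lt_of_lt_of_le (hp 0).1 (le_max_left _ _)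

include hp in
lemma qmax_lt_one : qmax p < 1 :=
  max_lt (hp 0).2 (max_lt (hp 1).2 (hp 2).2)

lemma p_le_qmax (i : Fin 3) : p i ≤ qmax p := by
  rcases fin3_cases i with h | h | h <;> subst h
  · exact le_max_left _ _
  · exact le_trans (le_max_left _ _) (le_max_right _ _)
  · exact le_trans (le_max_right _ _) (le_max_right _ _)

include hp in
lemma beta_nonneg (j : Fin 3) : 0 ≤ salemBeta p j := by
  rcases fin3_cases j with h | h | h <;> subst h
  · rw [beta_zero]
  · rw [beta_one]; exact (hp 0).1.le
  · rw [beta_two]; linarith [(hp 0).1, (hp 1).1]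

include hp hsum in
lemma beta_add_le (j : Fin 3) : salemBeta p j + p j ≤ 1 := by
  rcases fin3_cases j with h | h | h <;> subst h
  · rw [beta_zero]; linarith [(hp 1).1, (hp 2).1]
  · rw [beta_one]; linarith [(hp 2).1]
  · rw [beta_two]; linarith

include hp in
lemma prod_nonneg' (γ : ℕ → Fin 3) (k : ℕ) :
    0 ≤ ∏ r ∈ Finset.range k, p (γ r) :=
  Finset.prod_nonneg fun r _ => (hp (γ r)).1.le

include hp in
lemma prod_le_qpow (γ : ℕ → Fin 3) (k : ℕ) :
    ∏ r ∈ Finset.range k, p (γ r) ≤ qmax p ^ k := by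
  calc ∏ r ∈ Finset.range k, p (γ r) ≤ ∏ r ∈ Finset.range k, qmax p :=
        Finset.prod_le_prod (fun r _ => (hp (γ r)).1.le) (fun r _ => p_le_qmax p (γ r))
    _ = qmax p ^ k := by rw [Finset.prod_const, Finset.card_range]

include hp in
lemma term_nonneg (γ : ℕ → Fin 3) (k : ℕ) :
    0 ≤ salemBeta p (γ k) * ∏ r ∈ Finset.range k, p (γ r) :=
  mul_nonneg (beta_nonneg p hp _) (prod_nonneg' p hp γ k)

include hp hsum in
lemma salem_summable (γ : ℕ → Fin 3) :
    Summable (fun k => salemBeta p (γ k) * ∏ r ∈ Finset.range k, p (γ r)) := by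
  apply Summable.of_nonneg_of_le (term_nonneg p hp γ)
    (fun k => ?_) (summable_geometric_of_lt_one (qmax_pos p hp).le (qmax_lt_one p hp))
  calc salemBeta p (γ k) * ∏ r ∈ Finset.range k, p (γ r)
      ≤ 1 * qmax p ^ k := by
        apply mul_le_mul _ (prod_le_qpow p hp γ k) (prod_nonneg' p hp γ k) zero_le_one
        linarith [beta_add_le p hp hsum (γ k), (hp (γ k)).1]
    _ = qmax p ^ k := one_mul _

include hp hsum in
lemma salemVal_nonneg (γ : ℕ → Fin 3) : 0 ≤ salemVal p γ :=
  tsum_nonneg (term_nonneg p hp γ)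

include hp hsum in
lemma salemVal_le_one (γ : ℕ → Fin 3) : salemVal p γ ≤ 1 := by
  apply Summable.tsum_le_of_sum_range_le (salem_summable p hp hsum γ)
  intro n
  have key : ∀ k, salemBeta p (γ k) * ∏ r ∈ Finset.range k, p (γ r)
      ≤ (∏ r ∈ Finset.range k, p (γ r)) - (∏ r ∈ Finset.range (k+1), p (γ r)) := by
    intro k
    rw [Finset.prod_range_succ]
    have h1 : salemBeta p (γ k) ≤ 1 - p (γ k) := by linarith [beta_add_le p hp hsum (γ k)]
    have h2 := prod_nonneg' p hp γ k
    nlinarith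
  calc ∑ k ∈ Finset.range n, salemBeta p (γ k) * ∏ r ∈ Finset.range k, p (γ r)
      ≤ ∑ k ∈ Finset.range n,
          ((∏ r ∈ Finset.range k, p (γ r)) - (∏ r ∈ Finset.range (k+1), p (γ r))) :=
        Finset.sum_le_sum fun k _ => key k
    _ = (∏ r ∈ Finset.range 0, p (γ r)) - (∏ r ∈ Finset.range n, p (γ r)) := by
        rw [Finset.sum_range_sub' (fun k => ∏ r ∈ Finset.range k, p (γ r)) n]
    _ ≤ 1 := by simpa using prod_nonneg' p hp γ n

/-- Greedy digit. -/
noncomputable def dig (x : ℝ) : Fin 3 :=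
  if x < p 0 then 0 else if x < p 0 + p 1 then 1 else 2

/-- Contraction inverse map. -/
noncomputable def Tmap (x : ℝ) : ℝ := (x - salemBeta p (dig p x)) / p (dig p x)

include hp hsum in
lemma step (x : ℝ) (hx : x ∈ Set.Icc (0:ℝ) 1) :
    salemBeta p (dig p x) + p (dig p x) * Tmap p x = x ∧ Tmap p x ∈ Set.Icc (0:ℝ) 1 := by
  obtain ⟨hx0, hx1⟩ := hx
  have hid : ∀ j : Fin 3, dig p x = j →
      salemBeta p (dig p x) + p (dig p x) * Tmap p x = x := by
    intro j hj
    rw [Tmap, hj, mul_div_cancel₀ _ (ne_of_gt (hp j).1)]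
    ring
  rw [Tmap]
  by_cases h0 : x < p 0
  · have hd : dig p x = 0 := by rw [dig, if_pos h0]
    refine ⟨hid 0 hd, ?_⟩
    rw [hd, beta_zero]
    constructor
    · apply div_nonneg (by linarith) (hp 0).1.le
    · rw [div_le_one (hp 0).1]; linarith
  · by_cases h1 : x < p 0 + p 1
    · have hd : dig p x = 1 := by rw [dig, if_neg h0, if_pos h1]
      refine ⟨hid 1 hd, ?_⟩
      rw [hd, beta_one]
      constructor
      · apply div_nonneg (by linarith) (hp 1).1.le
      · rw [div_le_one (hp 1).1]; linarith
    · have hd : dig p x = 2 := by rw [dig, if_neg h0, if_neg h1]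
      refine ⟨hid 2 hd, ?_⟩
      rw [hd, beta_two]
      constructor
      · apply div_nonneg (by linarith) (hp 2).1.le
      · rw [div_le_one (hp 2).1]; linarith

include hp hsum in
lemma iter_mem (x : ℝ) (hx : x ∈ Set.Icc (0:ℝ) 1) (n : ℕ) :
    (Tmap p)^[n] x ∈ Set.Icc (0:ℝ) 1 := by
  induction n with
  | zero => simpa using hx
  | succ n ih =>
      rw [Function.iterate_succ_apply']
      exact (step p hp hsum _ ih).2

include hp hsum in
lemma iter_id (x : ℝ) (hx : x ∈ Set.Icc (0:ℝ) 1) (n : ℕ) :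
    (∑ k ∈ Finset.range n,
        salemBeta p (dig p ((Tmap p)^[k] x)) *
          ∏ r ∈ Finset.range k, p (dig p ((Tmap p)^[r] x)))
      + (∏ r ∈ Finset.range n, p (dig p ((Tmap p)^[r] x))) * (Tmap p)^[n] x = x := by
  induction n with
  | zero => simp
  | succ n ih =>
      rw [Finset.sum_range_succ, Finset.prod_range_succ, Function.iterate_succ_apply']
      have hstep := (step p hp hsum ((Tmap p)^[n] x) (iter_mem p hp hsum x hx n)).1
      linear_combination ih + (∏ r ∈ Finset.range n, p (dig p ((Tmap p)^[r] x))) * hstep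

include hp hsum in
lemma salem_surj (x : ℝ) (hx : x ∈ Set.Icc (0:ℝ) 1) :
    ∃ γ : ℕ → Fin 3, salemVal p γ = x := by
  set γ : ℕ → Fin 3 := fun k => dig p ((Tmap p)^[k] x) with hγ
  refine ⟨γ, ?_⟩
  have hsummable := salem_summable p hp hsum γ
  have h1 : Filter.Tendsto
      (fun n => ∑ k ∈ Finset.range n, salemBeta p (γ k) * ∏ r ∈ Finset.range k, p (γ r))
      Filter.atTop (nhds (salemVal p γ)) := hsummable.hasSum.tendsto_sum_nat
  have h2 : Filter.Tendsto
      (fun n => ∑ k ∈ Finset.range n, salemBeta p (γ k) * ∏ r ∈ Finset.range k, p (γ r))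
      Filter.atTop (nhds x) := by
    have hrem : ∀ n, x - (∑ k ∈ Finset.range n,
        salemBeta p (γ k) * ∏ r ∈ Finset.range k, p (γ r))
        = (∏ r ∈ Finset.range n, p (γ r)) * (Tmap p)^[n] x := by
      intro n
      have := iter_id p hp hsum x hx n
      simp only [hγ]
      linarith
    have htend0 : Filter.Tendsto
        (fun n => (∏ r ∈ Finset.range n, p (γ r)) * (Tmap p)^[n] x)
        Filter.atTop (nhds 0) := by
      apply squeeze_zero (fun n => ?_) (fun n => ?_)
        (tendsto_pow_atTop_nhds_zero_of_lt_one (qmax_pos p hp).le (qmax_lt_one p hp))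
      · exact mul_nonneg (prod_nonneg' p hp γ n) (iter_mem p hp hsum x hx n).1
      · calc (∏ r ∈ Finset.range n, p (γ r)) * (Tmap p)^[n] x
            ≤ (∏ r ∈ Finset.range n, p (γ r)) * 1 :=
              mul_le_mul_of_nonneg_left (iter_mem p hp hsum x hx n).2
                (prod_nonneg' p hp γ n)
          _ ≤ qmax p ^ n := by rw [mul_one]; exact prod_le_qpow p hp γ n
    have : Filter.Tendsto (fun n => x - (x - (∑ k ∈ Finset.range n,
        salemBeta p (γ k) * ∏ r ∈ Finset.range k, p (γ r)))) Filter.atTop (nhds (x - 0)) := by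
      apply Filter.Tendsto.sub tendsto_const_nhds
      simpa only [hrem] using htend0
    simpa using this
  exact tendsto_nhds_unique h1 h2

include hp hsum in
lemma salem_range : Set.range (salemVal p) = Set.Icc (0:ℝ) 1 := by
  ext x
  constructor
  · rintro ⟨γ, rfl⟩
    exact ⟨salemVal_nonneg p hp hsum γ, salemVal_le_one p hp hsum γ⟩
  · intro hx
    obtain ⟨γ, hγ⟩ := salem_surj p hp hsum x hx
    exact ⟨γ, hγ⟩

include hp hsum in
lemma salem_split (γ : ℕ → Fin 3) (m : ℕ) :
    salemVal p γ = (∑ k ∈ Finset.range m,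
        salemBeta p (γ k) * ∏ r ∈ Finset.range k, p (γ r))
      + (∏ r ∈ Finset.range m, p (γ r)) * salemVal p (fun j => γ (m + j)) := by
  rw [salemVal, ← Summable.sum_add_tsum_nat_add m (salem_summable p hp hsum γ)]
  congr 1
  rw [salemVal, ← tsum_mul_left]
  apply tsum_congr
  intro i
  rw [add_comm i m, Finset.prod_range_add]
  ring

include hp hsum in
lemma cylinder_eq (m : ℕ) (c : ℕ → Fin 3) :
    cylinder p m c = Set.Icc
      (∑ k ∈ Finset.range m, salemBeta p (c k) * ∏ r ∈ Finset.range k, p (c r))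
      ((∑ k ∈ Finset.range m, salemBeta p (c k) * ∏ r ∈ Finset.range k, p (c r))
        + ∏ r ∈ Finset.range m, p (c r)) := by
  set A := ∑ k ∈ Finset.range m, salemBeta p (c k) * ∏ r ∈ Finset.range k, p (c r) with hA
  set L := ∏ r ∈ Finset.range m, p (c r) with hL
  have hLpos : 0 < L := Finset.prod_pos fun r _ => (hp (c r)).1
  ext x
  constructor
  · rintro ⟨γ, hpre, rfl⟩
    have hAeq : (∑ k ∈ Finset.range m,
        salemBeta p (γ k) * ∏ r ∈ Finset.range k, p (γ r)) = A := by
      apply Finset.sum_congr rfl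
      intro k hk
      rw [Finset.mem_range] at hk
      rw [hpre k hk]
      congr 1
      exact Finset.prod_congr rfl fun r hr =>
        by rw [hpre r (lt_trans (Finset.mem_range.mp hr) hk)]
    have hLeq : (∏ r ∈ Finset.range m, p (γ r)) = L :=
      Finset.prod_congr rfl fun r hr => by rw [hpre r (Finset.mem_range.mp hr)]
    rw [salem_split p hp hsum γ m, hAeq, hLeq]
    have h0 := salemVal_nonneg p hp hsum (fun j => γ (m + j))
    have h1 := salemVal_le_one p hp hsum (fun j => γ (m + j))
    constructor <;> nlinarith
  · rintro ⟨hx0, hx1⟩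
    have hmem : (x - A) / L ∈ Set.Icc (0:ℝ) 1 := by
      constructor
      · apply div_nonneg (by linarith) hLpos.le
      · rw [div_le_one hLpos]; linarith
    obtain ⟨δ, hδ⟩ := salem_surj p hp hsum _ hmem
    refine ⟨fun k => if k < m then c k else δ (k - m), fun r hr => if_pos hr, ?_⟩
    rw [salem_split p hp hsum _ m]
    have htail : (fun j => if m + j < m then c (m + j) else δ (m + j - m)) = δ := by
      funext j
      rw [if_neg (by omega)]
      congr 1
      omega
    have hAeq : (∑ k ∈ Finset.range m, salemBeta p (if k < m then c k else δ (k - m)) *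
        ∏ r ∈ Finset.range k, p (if r < m then c r else δ (r - m))) = A := by
      apply Finset.sum_congr rfl
      intro k hk
      rw [Finset.mem_range] at hk
      rw [if_pos hk]
      congr 1
      exact Finset.prod_congr rfl fun r hr =>
        by rw [if_pos (lt_trans (Finset.mem_range.mp hr) hk)]
    have hLeq : (∏ r ∈ Finset.range m, p (if r < m then c r else δ (r - m))) = L :=
      Finset.prod_congr rfl fun r hr => by rw [if_pos (Finset.mem_range.mp hr)]
    simp only [htail, hAeq, hLeq, hδ]
    field_simp
    ring

include hp hsum in
lemma cylinder_volume (m : ℕ) (c : ℕ → Fin 3) :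
    MeasureTheory.volume (cylinder p m c)
      = ENNReal.ofReal (∏ r ∈ Finset.range m, p (c r)) := by
  rw [cylinder_eq p hp hsum m c, Real.volume_Icc]
  congr 1
  ring

end Aux

/-- θ does not preserve Lebesgue measure: if `p 1 ≠ p 2`, then for the word
`d = (1,1,1,2,2)` one has `|Λ_d| = p 1 ^ 3 * p 2 ^ 2`, the image cylinder has base
`(2,2,2,1,1)` with measure `p 2 ^ 3 * p 1 ^ 2`, and these two numbers differ. -/
theorem theta_not_measure_preserving (p : Fin 3 → ℝ) (hp : ∀ i, 0 < p i ∧ p i < 1)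
    (hsum : p 0 + p 1 + p 2 = 1) (hne : p 1 ≠ p 2) :
    MeasureTheory.volume (cylinder p 5 (fun k => if k < 3 then 1 else 2)) =
        ENNReal.ofReal (p 1 ^ 3 * p 2 ^ 2) ∧
      MeasureTheory.volume (cylinder p 5 (fun k => theta (if k < 3 then 1 else 2))) =
        ENNReal.ofReal (p 2 ^ 3 * p 1 ^ 2) ∧
      (fun k : ℕ => theta (if k < 3 then 1 else 2)) =
        (fun k : ℕ => if k < 3 then (2 : Fin 3) else 1) ∧
      p 1 ^ 3 * p 2 ^ 2 ≠ p 2 ^ 3 * p 1 ^ 2 := by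
  have hfun : (fun k : ℕ => theta (if k < 3 then 1 else 2)) =
      (fun k : ℕ => if k < 3 then (2 : Fin 3) else 1) := by
    funext k
    by_cases h : k < 3 <;> simp [theta, h]
  refine ⟨?_, ?_, hfun, ?_⟩
  · rw [cylinder_volume p hp hsum 5 _]
    congr 1
    simp only [Finset.prod_range_succ, Finset.prod_range_zero]
    norm_num
    ring
  · rw [hfun, cylinder_volume p hp hsum 5 _]
    congr 1
    simp only [Finset.prod_range_succ, Finset.prod_range_zero]
    norm_num
    ring
  · intro h
    apply hne
    have key : p 1 ^ 2 * p 2 ^ 2 * (p 1 - p 2) = 0 := by linear_combination h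
    have pos : 0 < p 1 ^ 2 * p 2 ^ 2 := mul_pos (pow_pos (hp 1).1 2) (pow_pos (hp 2).1 2)
    have := (mul_eq_zero.mp key).resolve_left (ne_of_gt pos)
    linarith
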